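/- arXiv:2409.13076 — 4 statements merged into one kernel-verified Lean document; each statement's English description precedes it below -/
import Mathlib

section
/- For every integer d ≥ 2 and every integer k ≥ 5, there exists a (k, d, N)-full oriented graph with N = ⌈8^d · log k⌉ (natural logarithm). -/
/-- An oriented graph: a directed graph with no loops and no pair of opposite arcs. -/
structure OrientedGraph (V : Type*) where
  adj : V → V → Prop
  loopless : ∀ v, ¬ adj v v
  no_opposite : ∀ u v, adj u v → ¬ adj v u

namespace OrientedGraph

variable {V W : Type*}

/-- `f` is a homomorphism of oriented graphs from `G` to `H`: arcs map to arcs. -/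
def IsHom (G : OrientedGraph V) (H : OrientedGraph W) (f : V → W) : Prop :=
  ∀ u v, G.adj u v → H.adj (f u) (f v)

/-- The oriented chromatic number of an oriented graph: the least `n` such that `G`
admits a homomorphism to an oriented graph on `n` vertices. -/
noncomputable def chiO (G : OrientedGraph V) : ℕ :=
  sInf {n : ℕ | ∃ H : OrientedGraph (Fin n), ∃ f : V → Fin n, G.IsHom H f}

/-- The underlying simple graph of an oriented graph. -/
def underlying (G : OrientedGraph V) : SimpleGraph V where
  Adj u v := G.adj u v ∨ G.adj v u
  symm := ⟨by intro u v h; tauto⟩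
  loopless := ⟨by intro v h; rcases h with h | h <;> exact G.loopless v h⟩

/-- The degree of a vertex in (the underlying graph of) an oriented graph. -/
noncomputable def degree (G : OrientedGraph V) (v : V) : ℕ :=
  Nat.card {u : V | G.adj v u ∨ G.adj u v}

/-- A 2-dipath colouring: a proper colouring of the underlying graph such that the
endpoints of any directed path of length 2 receive distinct colours. -/
def Is2DipathColouring (G : OrientedGraph V) {α : Type*} (φ : V → α) : Prop :=
  (∀ u v, G.adj u v → φ u ≠ φ v) ∧
  (∀ u v w, G.adj u v → G.adj v w → u ≠ w → φ u ≠ φ w)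

/-- The 2-dipath chromatic number: the least number of colours in a 2-dipath colouring. -/
noncomputable def chi2 (G : OrientedGraph V) : ℕ :=
  sInf {n : ℕ | ∃ φ : V → Fin n, G.Is2DipathColouring φ}

end OrientedGraph

/-- A `(k, d, N)`-full graph: an orientation of the complete `k`-partite graph with
parts `P i = part ⁻¹' {i}`, each of size `N`, such that for every part index `i`,
every ordered set of `t ≤ d` vertices outside `P i` and every sign pattern
`vec : Fin t → Bool` (`true` meaning the arc leaves `P i`), some vertex of `P i`
realizes the pattern. -/
structure FullGraph (V : Type*) (k d N : ℕ) where
  H : OrientedGraph V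
  part : V → Fin k
  partCard : ∀ i : Fin k, Nat.card {v : V | part v = i} = N
  multipartite : ∀ u v : V, part u ≠ part v ↔ (H.adj u v ∨ H.adj v u)
  full : ∀ (i : Fin k) (t : ℕ), t ≤ d → ∀ u : Fin t → V, Function.Injective u →
    (∀ j, part (u j) ≠ i) → ∀ vec : Fin t → Bool,
    ∃ x : V, part x = i ∧ ∀ j, if vec j then H.adj x (u j) else H.adj (u j) x

open Classical Finset

namespace FGC

variable {k N : ℕ}

/-- Index of a vertex. -/
def ι {k N : ℕ} (v : Fin k × Fin N) : ℕ := v.1.1 * N + v.2.1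

lemma ι_inj : Function.Injective (ι (k := k) (N := N)) := by
  rintro ⟨i, a⟩ ⟨j, b⟩ h
  simp only [ι] at h
  have ha := a.2; have hb := b.2
  have hij : i.1 = j.1 := by
    rcases lt_trichotomy i.1 j.1 with hlt | heq | hgt
    · exfalso
      have h2 : i.1 * N + N ≤ j.1 * N := by
        calc i.1 * N + N = (i.1 + 1) * N := by ring
        _ ≤ j.1 * N := Nat.mul_le_mul_right N hlt
      linarith
    · exact heq
    · exfalso
      have h2 : j.1 * N + N ≤ i.1 * N := by
        calc j.1 * N + N = (j.1 + 1) * N := by ring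
        _ ≤ i.1 * N := Nat.mul_le_mul_right N hgt
      linarith
  have hab : a.1 = b.1 := by
    have : i.1 * N = j.1 * N := by rw [hij]
    omega
  simp [Prod.ext_iff, Fin.ext_iff, hij, hab]

/-- Direction of the edge between `a` and `b` given the random bits `σ`. -/
def dirB (σ : (Fin k × Fin N) × (Fin k × Fin N) → Bool) (a b : Fin k × Fin N) : Bool :=
  if ι a ≤ ι b then σ (a, b) else !σ (b, a)

lemma dirB_swap (σ : (Fin k × Fin N) × (Fin k × Fin N) → Bool) {a b : Fin k × Fin N}
    (hab : a ≠ b) : dirB σ b a = !(dirB σ a b) := by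
  rcases lt_trichotomy (ι a) (ι b) with h | h | h
  · rw [dirB, dirB, if_pos h.le, if_neg (by omega)]
  · exact absurd (ι_inj h) hab
  · rw [dirB, dirB, if_pos h.le, if_neg (by omega), Bool.not_not]

/-- Adjacency. -/
def Adj (σ : (Fin k × Fin N) × (Fin k × Fin N) → Bool) (a b : Fin k × Fin N) : Prop :=
  a.1 ≠ b.1 ∧ dirB σ a b = true

/-- The oriented graph determined by bits `σ`. -/
def OG (σ : (Fin k × Fin N) × (Fin k × Fin N) → Bool) : OrientedGraph (Fin k × Fin N) where
  adj := Adj σ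
  loopless := fun v h => h.1 rfl
  no_opposite := fun a b h h' => by
    have hab : a ≠ b := fun e => h.1 (congrArg Prod.fst e)
    have := dirB_swap σ hab
    rw [h'.2, h.2] at this
    simp at this

def coordOf (a b : Fin k × Fin N) : (Fin k × Fin N) × (Fin k × Fin N) :=
  if ι a ≤ ι b then (a, b) else (b, a)

def tgt (a b : Fin k × Fin N) : Bool := decide (ι a ≤ ι b)

lemma dirB_eq_true_iff (σ : (Fin k × Fin N) × (Fin k × Fin N) → Bool) (a b : Fin k × Fin N) :
    dirB σ a b = true ↔ σ (coordOf a b) = tgt a b := by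
  unfold dirB coordOf tgt
  split_ifs with h <;> simp [h]

lemma coordOf_symm {a b : Fin k × Fin N} (hab : a ≠ b) : coordOf b a = coordOf a b := by
  rcases lt_trichotomy (ι a) (ι b) with h | h | h
  · rw [coordOf, coordOf, if_pos h.le, if_neg (by omega)]
  · exact absurd (ι_inj h) hab
  · rw [coordOf, coordOf, if_pos h.le, if_neg (by omega)]

end FGC
namespace FGC

variable {k N : ℕ}

/-- Coordinate used by the pair `(i,x), u j`. -/
def cOf (i : Fin k) {t : ℕ} (u : Fin t → Fin k × Fin N) (x : Fin N) (j : Fin t) :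
    (Fin k × Fin N) × (Fin k × Fin N) := coordOf (i, x) (u j)

/-- Required bit. -/
def bOf (i : Fin k) {t : ℕ} (u : Fin t → Fin k × Fin N) (vec : Fin t → Bool)
    (x : Fin N) (j : Fin t) : Bool :=
  if vec j then tgt (i, x) (u j) else tgt (u j) (i, x)

lemma cond_iff (σ : (Fin k × Fin N) × (Fin k × Fin N) → Bool) (i : Fin k) {t : ℕ}
    (u : Fin t → Fin k × Fin N) (vec : Fin t → Bool) (x : Fin N) (j : Fin t)
    (hj : (u j).1 ≠ i) :
    (if vec j then Adj σ (i, x) (u j) else Adj σ (u j) (i, x)) ↔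
      σ (cOf i u x j) = bOf i u vec x j := by
  have hne : ((i, x) : Fin k × Fin N) ≠ u j := fun e => hj (by rw [← e])
  cases hv : vec j with
  | true =>
    rw [if_pos rfl, bOf, if_pos hv]
    show Adj σ (i, x) (u j) ↔ _
    rw [Adj, cOf, dirB_eq_true_iff]
    constructor
    · exact fun h => h.2
    · exact fun h => ⟨fun e => hj e.symm, h⟩
  | false =>
    rw [if_neg (by simp), bOf, if_neg (by simp [hv])]
    show Adj σ (u j) (i, x) ↔ _
    rw [Adj, cOf, dirB_eq_true_iff, coordOf_symm hne.symm]
    constructor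
    · exact fun h => h.2
    · exact fun h => ⟨hj, h⟩

lemma cOf_inj (i : Fin k) {t : ℕ} (u : Fin t → Fin k × Fin N)
    (hu : Function.Injective u) (hout : ∀ j, (u j).1 ≠ i) :
    Function.Injective (fun p : Fin N × Fin t => cOf i u p.1 p.2) := by
  rintro ⟨x, j⟩ ⟨x', j'⟩ h
  simp only [cOf, coordOf] at h
  have key : ((i, x) : Fin k × Fin N) = (i, x') ∧ u j = u j' := by
    split_ifs at h with h1 h2 h2
    · exact ⟨congrArg Prod.fst h, congrArg Prod.snd h⟩
    · exact absurd (congrArg (fun p => p.1.1) h).symm (hout j')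
    · exact absurd (congrArg (fun p => p.1.1) h) (hout j)
    · exact ⟨congrArg Prod.snd h, congrArg Prod.fst h⟩
  obtain ⟨h1, h2⟩ := key
  have : x = x' := congrArg Prod.snd h1
  simp [this, hu h2]

end FGC
namespace FGC

variable {k N : ℕ}

lemma card_fail_le (hN : 0 < N) (i : Fin k) {t : ℕ} (u : Fin t → Fin k × Fin N)
    (hu : Function.Injective u) (hout : ∀ j, (u j).1 ≠ i) (vec : Fin t → Bool) :
    ((Finset.univ : Finset (((Fin k × Fin N) × (Fin k × Fin N)) → Bool)).filter
      (fun σ => ∀ x : Fin N, ∃ j, σ (cOf i u x j) ≠ bOf i u vec x j)).card ≤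
    (2 ^ t - 1) ^ N * 2 ^ (Fintype.card ((Fin k × Fin N) × (Fin k × Fin N)) - N * t) := by
  classical
  rcases Nat.eq_zero_or_pos t with rfl | ht
  · have : ((Finset.univ : Finset (((Fin k × Fin N) × (Fin k × Fin N)) → Bool)).filter
        (fun σ => ∀ x : Fin N, ∃ j : Fin 0, σ (cOf i u x j) ≠ bOf i u vec x j)) = ∅ := by
      rw [Finset.filter_eq_empty_iff]
      intro σ _ h
      obtain ⟨j, _⟩ := h ⟨0, hN⟩
      exact j.elim0
    rw [this]
    simp
  set c : Fin N × Fin t → (Fin k × Fin N) × (Fin k × Fin N) := fun p => cOf i u p.1 p.2 with hc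
  have hcinj : Function.Injective c := cOf_inj i u hu hout
  let T := {y : (Fin k × Fin N) × (Fin k × Fin N) // y ∉ Set.range c}
  set S : Finset (Fin N × Fin t → Bool) :=
    Finset.univ.filter (fun g => ∀ x : Fin N, ∃ j, g (x, j) ≠ bOf i u vec x j) with hS
  -- bound on S.card
  have hScard : S.card ≤ (2 ^ t - 1) ^ N := by
    have hcardPi : Fintype.card (∀ x : Fin N, {h : Fin t → Bool // ¬ (h = fun j => bOf i u vec x j)})
        = (2 ^ t - 1) ^ N := by
      rw [Fintype.card_pi]
      have : ∀ x : Fin N, Fintype.card {h : Fin t → Bool // ¬ (h = fun j => bOf i u vec x j)}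
          = 2 ^ t - 1 := by
        intro x
        rw [Fintype.card_subtype_compl, Fintype.card_subtype_eq, Fintype.card_fun]
        simp
      simp [this]
    rw [← hcardPi, ← Finset.card_univ]
    apply Finset.card_le_card_of_injOn
      (fun g x => if hx : ¬ ((fun j => g (x, j)) = fun j => bOf i u vec x j) then ⟨_, hx⟩
        else ⟨fun j => !(bOf i u vec x j), by
          intro hcontra
          have := congrFun hcontra ⟨0, ht⟩
          simp at this⟩)
    · intro g _; exact Finset.mem_univ _
    · intro g hg g' hg' hgg'
      simp only [hS, Finset.mem_coe, Finset.mem_filter] at hg hg'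
      funext p
      obtain ⟨x, j⟩ := p
      have hx : ¬ ((fun j => g (x, j)) = fun j => bOf i u vec x j) := by
        intro he
        obtain ⟨j0, hj0⟩ := hg.2 x
        exact hj0 (congrFun he j0)
      have hx' : ¬ ((fun j => g' (x, j)) = fun j => bOf i u vec x j) := by
        intro he
        obtain ⟨j0, hj0⟩ := hg'.2 x
        exact hj0 (congrFun he j0)
      have h0 := congrFun hgg' x
      simp only [dif_pos hx, dif_pos hx'] at h0
      exact congrFun (congrArg Subtype.val h0) j
  -- card of complement coordinates
  have hT : Fintype.card T = Fintype.card ((Fin k × Fin N) × (Fin k × Fin N)) - N * t := by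
    have h1 : Fintype.card {y : (Fin k × Fin N) × (Fin k × Fin N) // y ∈ Set.range c} = N * t := by
      rw [Fintype.card_eq.2 ⟨(Equiv.ofInjective c hcinj).symm⟩]
      simp
    show Fintype.card {y : (Fin k × Fin N) × (Fin k × Fin N) // y ∉ Set.range c} = _
    rw [Fintype.card_subtype_compl, h1]
  -- the injection into S ×ˢ univ
  have hmain : ((Finset.univ : Finset (((Fin k × Fin N) × (Fin k × Fin N)) → Bool)).filter
      (fun σ => ∀ x : Fin N, ∃ j, σ (cOf i u x j) ≠ bOf i u vec x j)).card ≤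
      (S ×ˢ (Finset.univ : Finset (T → Bool))).card := by
    apply Finset.card_le_card_of_injOn
      (fun σ => ((fun p => σ (c p)), (fun y => σ y.1)))
    · intro σ hσ
      simp only [Finset.mem_coe, Finset.mem_filter] at hσ
      rw [Finset.mem_coe, Finset.mem_product]
      refine ⟨?_, Finset.mem_univ _⟩
      rw [hS, Finset.mem_filter]
      exact ⟨Finset.mem_univ _, fun x => hσ.2 x⟩
    · intro σ _ σ' _ h
      funext y
      by_cases hy : y ∈ Set.range c
      · obtain ⟨p, hp⟩ := hy
        rw [← hp]
        exact congrFun (congrArg Prod.fst h) p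
      · exact congrFun (congrArg Prod.snd h) ⟨y, hy⟩
  calc _ ≤ (S ×ˢ (Finset.univ : Finset (T → Bool))).card := hmain
    _ = S.card * 2 ^ (Fintype.card ((Fin k × Fin N) × (Fin k × Fin N)) - N * t) := by
        rw [Finset.card_product, Finset.card_univ, Fintype.card_fun, ← hT]
        simp
    _ ≤ (2 ^ t - 1) ^ N * 2 ^ (Fintype.card ((Fin k × Fin N) × (Fin k × Fin N)) - N * t) :=
        Nat.mul_le_mul_right _ hScard

end FGC
namespace FGC

variable {k N : ℕ}

/-- The index type for bad events. -/
abbrev Idx (k N d : ℕ) :=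
  Fin k × Σ t : Fin (d + 1), (Fin (t : ℕ) → Fin k × Fin N) × (Fin (t : ℕ) → Bool)

/-- Counting bound for a single bad event. -/
def bnd (k N : ℕ) (t : ℕ) : ℕ :=
  (2 ^ t - 1) ^ N * 2 ^ (Fintype.card ((Fin k × Fin N) × (Fin k × Fin N)) - N * t)

lemma exists_good (d : ℕ) (hN : 0 < N)
    (hlt : ∑ p : Idx k N d, bnd k N (p.2.1 : ℕ) <
      Fintype.card (((Fin k × Fin N) × (Fin k × Fin N)) → Bool)) :
    ∃ σ : ((Fin k × Fin N) × (Fin k × Fin N)) → Bool,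
      ∀ (i : Fin k) (t : ℕ) (htd : t ≤ d) (u : Fin t → Fin k × Fin N),
        Function.Injective u → (∀ j, (u j).1 ≠ i) → ∀ vec : Fin t → Bool,
        ∃ x : Fin N, ∀ j, σ (cOf i u x j) = bOf i u vec x j := by
  classical
  by_contra hcon
  push_neg at hcon
  have hsub : (Finset.univ : Finset (((Fin k × Fin N) × (Fin k × Fin N)) → Bool)) ⊆
      Finset.univ.biUnion (fun p : Idx k N d =>
        Finset.univ.filter (fun σ =>
          (Function.Injective p.2.2.1 ∧ ∀ j, (p.2.2.1 j).1 ≠ p.1) ∧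
          ∀ x : Fin N, ∃ j, σ (cOf p.1 p.2.2.1 x j) ≠ bOf p.1 p.2.2.1 p.2.2.2 x j)) := by
    intro σ _
    obtain ⟨i, t, htd, u, hu, hout, vec, hfail⟩ := hcon σ
    rw [Finset.mem_biUnion]
    refine ⟨⟨i, ⟨⟨t, Nat.lt_succ_of_le htd⟩, u, vec⟩⟩, Finset.mem_univ _, ?_⟩
    rw [Finset.mem_filter]
    exact ⟨Finset.mem_univ _, ⟨hu, hout⟩, hfail⟩
  have hcard := (Finset.card_le_card hsub).trans (Finset.card_biUnion_le)
  rw [Finset.card_univ] at hcard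
  have hbound : ∀ p : Idx k N d,
      (Finset.univ.filter (fun σ : ((Fin k × Fin N) × (Fin k × Fin N)) → Bool =>
        (Function.Injective p.2.2.1 ∧ ∀ j, (p.2.2.1 j).1 ≠ p.1) ∧
        ∀ x : Fin N, ∃ j, σ (cOf p.1 p.2.2.1 x j) ≠ bOf p.1 p.2.2.1 p.2.2.2 x j)).card ≤
      bnd k N (p.2.1 : ℕ) := by
    intro p
    by_cases hv : Function.Injective p.2.2.1 ∧ ∀ j, (p.2.2.1 j).1 ≠ p.1
    · refine le_trans (Finset.card_le_card ?_) (card_fail_le hN p.1 p.2.2.1 hv.1 hv.2 p.2.2.2)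
      intro σ hσ
      rw [Finset.mem_filter] at hσ ⊢
      exact ⟨hσ.1, hσ.2.2⟩
    · have : (Finset.univ.filter (fun σ : ((Fin k × Fin N) × (Fin k × Fin N)) → Bool =>
          (Function.Injective p.2.2.1 ∧ ∀ j, (p.2.2.1 j).1 ≠ p.1) ∧
          ∀ x : Fin N, ∃ j, σ (cOf p.1 p.2.2.1 x j) ≠ bOf p.1 p.2.2.1 p.2.2.2 x j)) = ∅ := by
        rw [Finset.filter_eq_empty_iff]
        exact fun σ _ h => hv h.1
      rw [this]
      exact Nat.zero_le _
  have : Fintype.card (((Fin k × Fin N) × (Fin k × Fin N)) → Bool) ≤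
      ∑ p : Idx k N d, bnd k N (p.2.1 : ℕ) :=
    hcard.trans (Finset.sum_le_sum (fun p _ => hbound p))
  exact absurd hlt (not_lt.2 this)

end FGC
namespace FGC

variable {k N : ℕ}

lemma sum_bnd (d : ℕ) :
    ∑ p : Idx k N d, bnd k N (p.2.1 : ℕ) =
      k * ∑ t ∈ Finset.range (d + 1), (k * N) ^ t * 2 ^ t * bnd k N t := by
  rw [Fintype.sum_prod_type]
  dsimp only
  rw [Finset.sum_const, Finset.card_univ, Fintype.card_fin, smul_eq_mul]
  congr 1
  rw [← Finset.univ_sigma_univ, Finset.sum_sigma]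
  rw [← Fin.sum_univ_eq_sum_range (fun t => (k * N) ^ t * 2 ^ t * bnd k N t)]
  apply Finset.sum_congr rfl
  intro t _
  dsimp only
  rw [Finset.sum_const, Finset.card_univ, smul_eq_mul]
  congr 1
  rw [Fintype.card_prod, Fintype.card_fun, Fintype.card_fun]
  simp [mul_comm]

end FGC
namespace FGC

variable {k N : ℕ}

/-- Build a full graph from good bits. -/
def buildFull (d : ℕ) (hN : 0 < N) (σ : ((Fin k × Fin N) × (Fin k × Fin N)) → Bool)
    (hσ : ∀ (i : Fin k) (t : ℕ), t ≤ d → ∀ (u : Fin t → Fin k × Fin N),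
      Function.Injective u → (∀ j, (u j).1 ≠ i) → ∀ vec : Fin t → Bool,
      ∃ x : Fin N, ∀ j, σ (cOf i u x j) = bOf i u vec x j) :
    FullGraph (Fin k × Fin N) k d N where
  H := OG σ
  part := Prod.fst
  partCard := fun i => by
    have e : Fin N ≃ {v : Fin k × Fin N | v.1 = i} :=
      { toFun := fun x => ⟨(i, x), rfl⟩
        invFun := fun v => v.1.2
        left_inv := fun x => rfl
        right_inv := fun v => Subtype.ext (Prod.ext v.2.symm rfl) }
    calc Nat.card {v : Fin k × Fin N | v.1 = i} = Nat.card (Fin N) := Nat.card_congr e.symm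
      _ = N := by simp
  multipartite := fun a b => by
    constructor
    · intro hab
      have hne : a ≠ b := fun e => hab (congrArg Prod.fst e)
      cases h : dirB σ a b with
      | true => exact Or.inl ⟨hab, h⟩
      | false =>
        refine Or.inr ⟨Ne.symm hab, ?_⟩
        rw [dirB_swap σ hne, h]
        rfl
    · rintro (⟨h, _⟩ | ⟨h, _⟩)
      · exact h
      · exact Ne.symm h
  full := fun i t htd u hu hout vec => by
    obtain ⟨x, hx⟩ := hσ i t htd u hu hout vec
    refine ⟨(i, x), rfl, fun j => ?_⟩
    exact (cond_iff σ i u vec x j (hout j)).mpr (hx j)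

/-- Transport a full graph along an equivalence of vertex types. -/
def transportFull {V W : Type*} {d : ℕ} (e : V ≃ W) (F : FullGraph V k d N) :
    FullGraph W k d N where
  H := { adj := fun a b => F.H.adj (e.symm a) (e.symm b)
         loopless := fun a h => F.H.loopless _ h
         no_opposite := fun a b h h' => F.H.no_opposite _ _ h h' }
  part := fun w => F.part (e.symm w)
  partCard := fun i =>
    (Nat.card_congr (Equiv.subtypeEquiv e.symm (fun v => Iff.rfl))).trans (F.partCard i)
  multipartite := fun a b => F.multipartite _ _
  full := fun i t htd u hu hout vec => by
    obtain ⟨x, hx, hreal⟩ := F.full i t htd (fun j => e.symm (u j))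
      (fun j j' h => hu (e.symm.injective h)) hout vec
    refine ⟨e x, by simp [hx], fun j => ?_⟩
    have h := hreal j
    by_cases hv : vec j = true
    · rw [if_pos hv] at h ⊢
      show F.H.adj (e.symm (e x)) (e.symm (u j))
      rw [Equiv.symm_apply_apply]
      exact h
    · rw [if_neg hv] at h ⊢
      show F.H.adj (e.symm (u j)) (e.symm (e x))
      rw [Equiv.symm_apply_apply]
      exact h

end FGC
namespace FGC

lemma two_pow_sq (n : ℕ) : 2 ^ n * 2 ^ n = 4 ^ n := by
  rw [show (4:ℕ) = 2 * 2 from rfl, Nat.mul_pow]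

lemma add_two_le_four_pow {n : ℕ} (hn : 1 ≤ n) : n + 2 ≤ 4 ^ n := by
  have h1 : n < 2 ^ n := Nat.lt_two_pow_self (n := n)
  have h2 : 2 ≤ 2 ^ n := by
    calc 2 = 2 ^ 1 := rfl
    _ ≤ 2 ^ n := Nat.pow_le_pow_right (by norm_num) hn
  have h3 : 2 * 2 ^ n ≤ 2 ^ n * 2 ^ n := Nat.mul_le_mul_right _ h2
  rw [two_pow_sq] at h3
  omega

lemma nat_aux : ∀ d : ℕ, 2 ≤ d → 3 * d ^ 2 + 6 * d + 2 < 2 * 4 ^ d := by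
  intro d hd
  induction d with
  | zero => omega
  | succ n ih =>
    rcases Nat.lt_or_ge n 2 with hn | hn
    · interval_cases n
      · omega
      · norm_num
    · have h1 := ih hn
      have h2 : n + 2 ≤ 4 ^ n := add_two_le_four_pow (by omega)
      have h4 : 4 ^ (n + 1) = 4 * 4 ^ n := by ring
      nlinarith [h1, h2]

lemma step4 (d k N : ℕ) (hd : 2 ≤ d) (hk : 5 ≤ k) (hNle : N ≤ 8 ^ d * k) :
    k * (d + 1) * (2 * (k * N)) ^ d < k ^ (4 ^ d) := by
  have haux := nat_aux d hd
  have haux2 : 3 * (d * d) + 6 * d + 2 < 2 * 4 ^ d := by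
    have h := haux; rw [pow_two] at h; exact h
  have h2d1 : 2 * d + 1 ≤ 4 ^ d := by omega
  have hd1 : d + 1 ≤ 2 ^ d := Nat.lt_two_pow_self (n := d)
  have hbase : 2 * (k * N) ≤ 2 * 8 ^ d * k ^ 2 := by
    have h := Nat.mul_le_mul_left k hNle
    nlinarith
  have hpow : (2 * (k * N)) ^ d ≤ (2 * 8 ^ d * k ^ 2) ^ d := Nat.pow_le_pow_left hbase d
  have hexpand : (2 * 8 ^ d * k ^ 2) ^ d = 2 ^ d * 8 ^ (d * d) * k ^ (2 * d) := by
    rw [Nat.mul_pow, Nat.mul_pow, ← Nat.pow_mul, ← Nat.pow_mul]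
  have hstep : k * (d + 1) * (2 * (k * N)) ^ d ≤ k ^ (2 * d + 1) * (2 ^ (2 * d) * 8 ^ (d * d)) := by
    calc k * (d + 1) * (2 * (k * N)) ^ d
        ≤ k * 2 ^ d * (2 ^ d * 8 ^ (d * d) * k ^ (2 * d)) := by
          apply Nat.mul_le_mul (Nat.mul_le_mul_left _ hd1) (hexpand ▸ hpow)
      _ = k ^ (2 * d + 1) * (2 ^ (2 * d) * 8 ^ (d * d)) := by
          have e1 : k ^ (2 * d + 1) = k ^ (2 * d) * k := pow_succ k (2 * d)
          have e2 : (2:ℕ) ^ (2 * d) = 2 ^ d * 2 ^ d := by rw [two_mul, pow_add]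
          rw [e1, e2]; ring
  have hpow2 : 2 ^ (2 * d) * 8 ^ (d * d) = 2 ^ (2 * d + 3 * (d * d)) := by
    rw [pow_add, show (8:ℕ) = 2 ^ 3 from rfl, ← Nat.pow_mul]
  have hlt0 : 2 ^ (2 * d + 3 * (d * d)) < 2 ^ (2 * (4 ^ d - (2 * d + 1))) :=
    Nat.pow_lt_pow_right (by norm_num) (by omega)
  have h4eq : (4:ℕ) ^ (4 ^ d - (2 * d + 1)) = 2 ^ (2 * (4 ^ d - (2 * d + 1))) := by
    rw [Nat.pow_mul]
  have hlt : 2 ^ (2 * d + 3 * (d * d)) < 4 ^ (4 ^ d - (2 * d + 1)) := by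
    rw [h4eq]; exact hlt0
  have hk4 : 4 ^ (4 ^ d - (2 * d + 1)) ≤ k ^ (4 ^ d - (2 * d + 1)) :=
    Nat.pow_le_pow_left (by omega) _
  calc k * (d + 1) * (2 * (k * N)) ^ d
      ≤ k ^ (2 * d + 1) * (2 ^ (2 * d) * 8 ^ (d * d)) := hstep
    _ < k ^ (2 * d + 1) * k ^ (4 ^ d - (2 * d + 1)) := by
        rw [hpow2]
        exact mul_lt_mul_of_pos_left (lt_of_lt_of_le hlt hk4) (Nat.pow_pos (by omega))
    _ = k ^ (4 ^ d) := by rw [← pow_add]; congr 1; omega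

end FGC
namespace FGC

lemma qbound (d k N : ℕ) (hk : 5 ≤ k) (hNlog : (8:ℝ)^d * Real.log k ≤ (N:ℝ)) :
    (1 - (1/2:ℝ)^d)^N ≤ ((k:ℝ)^(4^d : ℕ))⁻¹ := by
  have hk0 : (0:ℝ) < k := by
    have : (5:ℝ) ≤ k := by exact_mod_cast hk
    linarith
  have hL : 0 ≤ Real.log k := Real.log_nonneg (by
    have : (5:ℝ) ≤ k := by exact_mod_cast hk
    linarith)
  have hx0 : (0:ℝ) < (1/2:ℝ)^d := by positivity
  have hx1 : (1/2:ℝ)^d ≤ 1 := pow_le_one₀ (by norm_num) (by norm_num)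
  have h1 : 1 - (1/2:ℝ)^d ≤ Real.exp (-(1/2:ℝ)^d) := by
    have := Real.add_one_le_exp (-(1/2:ℝ)^d)
    linarith
  have h2 : (1 - (1/2:ℝ)^d)^N ≤ Real.exp (-(1/2:ℝ)^d)^N :=
    pow_le_pow_left₀ (by linarith) h1 N
  have h3 : Real.exp (-(1/2:ℝ)^d)^N = Real.exp (-((N:ℝ) * (1/2:ℝ)^d)) := by
    rw [← Real.exp_nat_mul]
    ring_nf
  have h4 : ((4^d : ℕ):ℝ) * Real.log k ≤ (N:ℝ) * (1/2:ℝ)^d := by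
    have hmul := mul_le_mul_of_nonneg_right hNlog hx0.le
    have he : (8:ℝ)^d * (1/2:ℝ)^d = ((4^d : ℕ):ℝ) := by
      rw [← mul_pow]
      push_cast
      norm_num
    calc ((4^d : ℕ):ℝ) * Real.log k = (8:ℝ)^d * Real.log k * (1/2:ℝ)^d := by
          rw [mul_comm (((4^d : ℕ):ℝ)) (Real.log k), ← he]; ring
      _ ≤ (N:ℝ) * (1/2:ℝ)^d := hmul
  have h5 : Real.exp (-((N:ℝ) * (1/2:ℝ)^d)) ≤ Real.exp (-(((4^d : ℕ):ℝ) * Real.log k)) :=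
    Real.exp_le_exp.mpr (by linarith)
  have h6 : Real.exp (-(((4^d : ℕ):ℝ) * Real.log k)) = ((k:ℝ)^(4^d : ℕ))⁻¹ := by
    rw [Real.exp_neg, Real.exp_nat_mul, Real.exp_log hk0]
  calc (1 - (1/2:ℝ)^d)^N ≤ Real.exp (-(1/2:ℝ)^d)^N := h2
    _ = Real.exp (-((N:ℝ) * (1/2:ℝ)^d)) := h3
    _ ≤ Real.exp (-(((4^d : ℕ):ℝ) * Real.log k)) := h5
    _ = ((k:ℝ)^(4^d : ℕ))⁻¹ := h6

end FGC
namespace FGC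

lemma key (d k N M : ℕ) (hd : 2 ≤ d) (hk : 5 ≤ k) (hNpos : 0 < N)
    (hNlog : (8:ℝ)^d * Real.log k ≤ (N:ℝ)) (hNle : N ≤ 8 ^ d * k) (hM : N * d ≤ M) :
    k * ∑ t ∈ Finset.range (d + 1), (k * N) ^ t * 2 ^ t * ((2 ^ t - 1) ^ N * 2 ^ (M - N * t))
      < 2 ^ M := by
  have hk0 : (0:ℝ) < k := by
    have : (5:ℝ) ≤ k := by exact_mod_cast hk
    linarith
  set n : ℕ := k * N with hn
  have hn1 : 1 ≤ n := Nat.one_le_iff_ne_zero.2 (by positivity)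
  set q : ℝ := 1 - (1/2:ℝ)^d with hq
  have hxd1 : (1/2:ℝ)^d ≤ 1 := pow_le_one₀ (by norm_num) (by norm_num)
  have hq0 : 0 ≤ q := by rw [hq]; linarith
  -- per-term bound
  have hterm : ∀ t ∈ Finset.range (d + 1),
      ((n ^ t * 2 ^ t * ((2 ^ t - 1) ^ N * 2 ^ (M - N * t)) : ℕ) : ℝ) ≤
        (2 * (n:ℝ)) ^ d * q ^ N * 2 ^ M := by
    intro t ht
    rw [Finset.mem_range] at ht
    have htd : t ≤ d := by omega
    rcases Nat.eq_zero_or_pos t with rfl | ht1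
    · have : ((2:ℕ) ^ 0 - 1) ^ N = 0 := by
        simp [Nat.zero_pow hNpos]
      rw [this]
      simp
      positivity
    · have hNt : N * t ≤ M := le_trans (Nat.mul_le_mul_left N htd) hM
      have hcast : (((2:ℕ) ^ t - 1 : ℕ) : ℝ) = (2:ℝ) ^ t - 1 := by
        rw [Nat.cast_sub (Nat.one_le_two_pow)]
        push_cast
        ring
      have hsplit : ((2:ℝ) ^ t - 1) = 2 ^ t * (1 - (1/2:ℝ)^t) := by
        have : (2:ℝ) ^ t * (1/2:ℝ)^t = 1 := by
          rw [← mul_pow]; norm_num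
        ring_nf
        linarith [this]
      push_cast
      rw [hcast, hsplit, mul_pow]
      have hepow : ((2:ℝ) ^ t) ^ N * 2 ^ (M - N * t) = 2 ^ M := by
        rw [← pow_mul, ← pow_add]
        congr 1
        rw [Nat.mul_comm t N]
        omega
      calc ((n:ℝ)) ^ t * 2 ^ t * (((2:ℝ) ^ t) ^ N * (1 - (1/2:ℝ)^t) ^ N * 2 ^ (M - N * t))
          = (2 * (n:ℝ)) ^ t * (1 - (1/2:ℝ)^t) ^ N * (((2:ℝ) ^ t) ^ N * 2 ^ (M - N * t)) := by
            rw [mul_pow]; ring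
        _ = (2 * (n:ℝ)) ^ t * (1 - (1/2:ℝ)^t) ^ N * 2 ^ M := by rw [hepow]
        _ ≤ (2 * (n:ℝ)) ^ d * q ^ N * 2 ^ M := by
            have hb1 : (2 * (n:ℝ)) ^ t ≤ (2 * (n:ℝ)) ^ d := by
              apply pow_le_pow_right₀ ?_ htd
              have : (1:ℝ) ≤ n := by exact_mod_cast hn1
              linarith
            have hxt1 : (1/2:ℝ)^t ≤ 1 := pow_le_one₀ (by norm_num) (by norm_num)
            have hb2 : (1 - (1/2:ℝ)^t) ^ N ≤ q ^ N := by
              apply pow_le_pow_left₀ (by linarith)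
              rw [hq]
              have : (1/2:ℝ)^d ≤ (1/2:ℝ)^t :=
                pow_le_pow_of_le_one (by norm_num) (by norm_num) htd
              linarith
            have h2M : (0:ℝ) ≤ 2 ^ M := by positivity
            have hbn : (0:ℝ) ≤ (2 * (n:ℝ)) ^ t := by positivity
            calc (2 * (n:ℝ)) ^ t * (1 - (1/2:ℝ)^t) ^ N * 2 ^ M
                ≤ (2 * (n:ℝ)) ^ t * q ^ N * 2 ^ M := by
                  apply mul_le_mul_of_nonneg_right (mul_le_mul_of_nonneg_left hb2 hbn) h2M
              _ ≤ (2 * (n:ℝ)) ^ d * q ^ N * 2 ^ M := by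
                  apply mul_le_mul_of_nonneg_right (mul_le_mul_of_nonneg_right hb1 (by positivity)) h2M
  -- sum bound
  have hsum : ((∑ t ∈ Finset.range (d + 1),
      (n ^ t * 2 ^ t * ((2 ^ t - 1) ^ N * 2 ^ (M - N * t)) : ℕ) : ℕ) : ℝ) ≤
      ((d:ℝ) + 1) * ((2 * (n:ℝ)) ^ d * q ^ N * 2 ^ M) := by
    rw [Nat.cast_sum]
    calc ∑ t ∈ Finset.range (d + 1),
        ((n ^ t * 2 ^ t * ((2 ^ t - 1) ^ N * 2 ^ (M - N * t)) : ℕ) : ℝ)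
        ≤ ∑ _t ∈ Finset.range (d + 1), (2 * (n:ℝ)) ^ d * q ^ N * 2 ^ M :=
          Finset.sum_le_sum hterm
      _ = ((d:ℝ) + 1) * ((2 * (n:ℝ)) ^ d * q ^ N * 2 ^ M) := by
          rw [Finset.sum_const, Finset.card_range]
          push_cast
          ring
  -- final comparison
  rw [← Nat.cast_lt (α := ℝ), Nat.cast_mul]
  have hA : ((k * (d + 1) * (2 * n) ^ d : ℕ) : ℝ) < ((k:ℝ) ^ (4 ^ d : ℕ)) := by
    have := step4 d k N hd hk hNle
    rw [← hn] at this
    exact_mod_cast this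
  have hq4 : q ^ N ≤ ((k:ℝ)^(4^d : ℕ))⁻¹ := qbound d k N hk hNlog
  have hkpos : (0:ℝ) < (k:ℝ) ^ (4 ^ d : ℕ) := by positivity
  have hsmall : ((k:ℝ) * ((d:ℝ) + 1) * (2 * (n:ℝ)) ^ d) * q ^ N < 1 := by
    have hA0 : (0:ℝ) ≤ (k:ℝ) * ((d:ℝ) + 1) * (2 * (n:ℝ)) ^ d := by positivity
    have hA' : (k:ℝ) * ((d:ℝ) + 1) * (2 * (n:ℝ)) ^ d < (k:ℝ) ^ (4 ^ d : ℕ) := by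
      have : ((k * (d + 1) * (2 * n) ^ d : ℕ) : ℝ)
          = (k:ℝ) * ((d:ℝ) + 1) * (2 * (n:ℝ)) ^ d := by push_cast; ring
      linarith [hA, this.symm.le, this.le]
    calc ((k:ℝ) * ((d:ℝ) + 1) * (2 * (n:ℝ)) ^ d) * q ^ N
        ≤ ((k:ℝ) * ((d:ℝ) + 1) * (2 * (n:ℝ)) ^ d) * ((k:ℝ)^(4^d : ℕ))⁻¹ :=
          mul_le_mul_of_nonneg_left hq4 hA0
      _ < ((k:ℝ) ^ (4 ^ d : ℕ)) * ((k:ℝ)^(4^d : ℕ))⁻¹ :=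
          mul_lt_mul_of_pos_right hA' (by positivity)
      _ = 1 := mul_inv_cancel₀ (ne_of_gt hkpos)
  calc (k:ℝ) * ((∑ t ∈ Finset.range (d + 1),
        (n ^ t * 2 ^ t * ((2 ^ t - 1) ^ N * 2 ^ (M - N * t)) : ℕ) : ℕ) : ℝ)
      ≤ (k:ℝ) * (((d:ℝ) + 1) * ((2 * (n:ℝ)) ^ d * q ^ N * 2 ^ M)) :=
        mul_le_mul_of_nonneg_left hsum (le_of_lt hk0)
    _ = (((k:ℝ) * ((d:ℝ) + 1) * (2 * (n:ℝ)) ^ d) * q ^ N) * 2 ^ M := by ring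
    _ < 1 * 2 ^ M := mul_lt_mul_of_pos_right hsmall (by positivity)
    _ = ((2 ^ M : ℕ) : ℝ) := by push_cast; ring

end FGC

/-- For every `d ≥ 2` and `k ≥ 5` there exists a
`(k, d, ⌈8^d · log k⌉)`-full oriented graph (natural logarithm). -/
theorem exists_full_graph (d k : ℕ) (hd : 2 ≤ d) (hk : 5 ≤ k) :
    Nonempty (FullGraph (Fin (k * ⌈(8 : ℝ) ^ d * Real.log k⌉₊)) k d
      ⌈(8 : ℝ) ^ d * Real.log k⌉₊) := by
  classical
  set N := ⌈(8 : ℝ) ^ d * Real.log k⌉₊ with hNdef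
  have hk0 : (0:ℝ) < k := by
    have : (5:ℝ) ≤ k := by exact_mod_cast hk
    linarith
  have hlog1 : (1:ℝ) ≤ Real.log k := by
    rw [Real.le_log_iff_exp_le hk0]
    calc Real.exp 1 ≤ 2.7182818286 := (Real.exp_one_lt_d9).le
      _ ≤ 5 := by norm_num
      _ ≤ (k:ℝ) := by exact_mod_cast hk
  have hlogpos : (0:ℝ) < Real.log k := by linarith
  have hNlog : (8:ℝ)^d * Real.log k ≤ (N:ℝ) := Nat.le_ceil _
  have hNpos : 0 < N := by
    rw [hNdef]
    exact Nat.ceil_pos.mpr (mul_pos (by positivity) hlogpos)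
  have h8N : (8:ℕ)^d ≤ N := by
    have h8 : (((8:ℕ)^d : ℕ) : ℝ) ≤ (N:ℝ) := by
      push_cast
      calc (8:ℝ)^d = 8^d * 1 := (mul_one _).symm
        _ ≤ 8^d * Real.log k := mul_le_mul_of_nonneg_left hlog1 (by positivity)
        _ ≤ (N:ℝ) := hNlog
    exact_mod_cast h8
  have hdN : d ≤ N :=
    le_trans (le_of_lt (lt_of_lt_of_le (Nat.lt_two_pow_self (n := d))
      (Nat.pow_le_pow_left (by norm_num) d))) h8N
  have hNle : N ≤ 8^d * k := by
    have hnn : (0:ℝ) ≤ (8:ℝ)^d * Real.log k := mul_nonneg (by positivity) (by linarith)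
    have hceil : (N:ℝ) < (8:ℝ)^d * Real.log k + 1 := Nat.ceil_lt_add_one hnn
    have hlogk : Real.log k ≤ (k:ℝ) - 1 := Real.log_le_sub_one_of_pos hk0
    have hle : (N:ℝ) ≤ (((8:ℕ)^d * k : ℕ) : ℝ) := by
      push_cast
      have h1 : (1:ℝ) ≤ (8:ℝ)^d := one_le_pow₀ (by norm_num)
      nlinarith [hceil, hlogk]
    exact_mod_cast hle
  have hM : N * d ≤ Fintype.card ((Fin k × Fin N) × (Fin k × Fin N)) := by
    have hcard : Fintype.card ((Fin k × Fin N) × (Fin k × Fin N)) = (k*N) * (k*N) := by simp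
    rw [hcard]
    calc N * d ≤ N * N := Nat.mul_le_mul_left N hdN
      _ ≤ (k*N) * (k*N) :=
        Nat.mul_le_mul (Nat.le_mul_of_pos_left _ (by omega)) (Nat.le_mul_of_pos_left _ (by omega))
  have hcount : ∑ p : FGC.Idx k N d, FGC.bnd k N (p.2.1 : ℕ) <
      Fintype.card (((Fin k × Fin N) × (Fin k × Fin N)) → Bool) := by
    rw [FGC.sum_bnd d]
    have hcf : Fintype.card (((Fin k × Fin N) × (Fin k × Fin N)) → Bool) =
        2 ^ (Fintype.card ((Fin k × Fin N) × (Fin k × Fin N))) := by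
      rw [Fintype.card_fun]
      simp
    rw [hcf]
    exact FGC.key d k N _ hd hk hNpos hNlog hNle hM
  obtain ⟨σ, hσ⟩ := FGC.exists_good d hNpos hcount
  exact ⟨FGC.transportFull finProdFinEquiv (FGC.buildFull d hNpos σ hσ)⟩
end

section
/- Let k ≥ 5 and d ≥ 2 be integers and N = ⌈8^d log k⌉. If H is a uniformly random orientation of the complete k-partite graph with parts of size N, then the probability that H fails to be (k,d,N)-full is at most k·(kN)^d·2^d·exp(−2^{−d}N), and this quantity is strictly less than 1. -/
/-- A linear position used to fix, for each pair of vertices, which of the two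
possible arcs corresponds to the Boolean value `true`. -/
def vpos {k N : ℕ} (p : Fin k × Fin N) : ℕ := p.1.val * N + p.2.val

lemma vpos_inj {k N : ℕ} {u v : Fin k × Fin N} (h : vpos u = vpos v) : u = v := by
  obtain ⟨⟨a, ha⟩, ⟨b, hb⟩⟩ := u
  obtain ⟨⟨c, hc⟩, ⟨e, he⟩⟩ := v
  simp only [vpos] at h
  have hac : a = c := by
    rcases lt_trichotomy a c with h1 | h1 | h1
    · exfalso
      have h2 : a + 1 ≤ c := h1
      nlinarith
    · exact h1
    · exfalso
      have h2 : c + 1 ≤ a := h1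
      nlinarith
  subst hac
  have hbe : b = e := Nat.add_left_cancel h
  simp [hbe]

/-- The orientation of the complete `k`-partite graph (parts of size `N`, indexed by
the first coordinate) determined by a family of Booleans: the edge `{u,v}` (with
`vpos u < vpos v`) is oriented from `u` to `v` iff `f u v = true`.  As `f` ranges
uniformly over all Boolean families, each edge receives each of its two
orientations independently with probability `1/2`. -/
def orientOf {k N : ℕ} (f : Fin k × Fin N → Fin k × Fin N → Bool) :
    OrientedGraph (Fin k × Fin N) where
  adj u v := u.1 ≠ v.1 ∧
    (if vpos u < vpos v then f u v = true else f v u = false)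
  loopless := by intro v h; exact h.1 rfl
  no_opposite := by
    intro u v h h'
    obtain ⟨hne, h⟩ := h
    obtain ⟨-, h'⟩ := h'
    have hne' : vpos u ≠ vpos v := fun hh => hne (congrArg Prod.fst (vpos_inj hh))
    by_cases hlt : vpos u < vpos v
    · rw [if_pos hlt] at h
      rw [if_neg (by omega)] at h'
      exact absurd h (by simp [h'])
    · rw [if_neg hlt] at h
      rw [if_pos (by omega)] at h'
      exact absurd h' (by simp [h])

/-- The fullness property for an oriented graph with parts given by `part`. -/
def IsFullOn {V : Type*} {k : ℕ} (H : OrientedGraph V) (part : V → Fin k)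
    (d : ℕ) : Prop :=
  ∀ (i : Fin k) (t : ℕ), t ≤ d → ∀ u : Fin t → V, Function.Injective u →
    (∀ j, part (u j) ≠ i) → ∀ vec : Fin t → Bool,
    ∃ x : V, part x = i ∧ ∀ j, if vec j then H.adj x (u j) else H.adj (u j) x



open Function
open scoped Classical

/-- Split functions on `α` into values on the range of `c` and the rest. -/
noncomputable def splitEquiv {α β : Type*} (c : β → α) (hc : Function.Injective c) :
    (α → Bool) ≃ (β → Bool) × ({a : α // a ∉ Set.range c} → Bool) where
  toFun f := (f ∘ c, fun x => f x.1)
  invFun p a := if ha : a ∈ Set.range c then p.1 ha.choose else p.2 ⟨a, ha⟩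
  left_inv f := by
    funext a
    by_cases ha : a ∈ Set.range c
    · simp only [dif_pos ha]
      exact congrArg f ha.choose_spec
    · simp only [dif_neg ha]
  right_inv p := by
    refine Prod.ext ?_ ?_
    · funext b
      have hb : c b ∈ Set.range c := ⟨b, rfl⟩
      simp only [Function.comp_apply, dif_pos hb]
      exact congrArg p.1 (hc hb.choose_spec)
    · funext x
      obtain ⟨a, ha⟩ := x
      simp only [dif_neg ha]

def prodSubtypeEquiv {γ δ : Type*} (P : γ → Prop) : {p : γ × δ // P p.1} ≃ {g : γ // P g} × δ where
  toFun p := (⟨p.1.1, p.2⟩, p.1.2)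
  invFun q := ⟨(q.1.1, q.2), q.1.2⟩
  left_inv _ := rfl
  right_inv _ := rfl

lemma card_precomp {α β : Type*} [Finite α] (c : β → α) (hc : Function.Injective c)
    (P : (β → Bool) → Prop) :
    Nat.card {f : α → Bool // P (f ∘ c)} * Nat.card (β → Bool) =
      Nat.card {g : β → Bool // P g} * Nat.card (α → Bool) := by
  have : Finite β := Finite.of_injective c hc
  have e1 : {f : α → Bool // P (f ∘ c)} ≃
      {g : β → Bool // P g} × ({a : α // a ∉ Set.range c} → Bool) :=
    ((splitEquiv c hc).subtypeEquiv (fun f => Iff.rfl)).trans (prodSubtypeEquiv P)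
  have h1 : Nat.card {f : α → Bool // P (f ∘ c)} =
      Nat.card {g : β → Bool // P g} * Nat.card ({a : α // a ∉ Set.range c} → Bool) := by
    rw [Nat.card_congr e1, Nat.card_prod]
  have h2 : Nat.card (α → Bool) =
      Nat.card (β → Bool) * Nat.card ({a : α // a ∉ Set.range c} → Bool) := by
    rw [Nat.card_congr ((splitEquiv c hc).trans (Equiv.refl _)), Nat.card_prod]
  rw [h1, h2]; ring

lemma card_avoid {ι κ : Type*} [Fintype ι] [Finite κ] (t : ι → κ) :
    Nat.card {g : ι → κ // ∀ x, g x ≠ t x} = (Nat.card κ - 1) ^ (Nat.card ι) := by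
  have e : {g : ι → κ // ∀ x, g x ≠ t x} ≃ ∀ x : ι, {y : κ // y ≠ t x} :=
    Equiv.subtypePiEquivPi (p := fun x y => y ≠ t x)
  rw [Nat.card_congr e, Nat.card_pi]
  have h : ∀ x : ι, Nat.card {y : κ // y ≠ t x} = Nat.card κ - 1 := by
    intro x
    have := Fintype.ofFinite κ
    rw [Nat.card_eq_fintype_card, Nat.card_eq_fintype_card]
    calc Fintype.card {y : κ // y ≠ t x} = Fintype.card {y : κ // ¬ y = t x} := rfl
      _ = Fintype.card κ - Fintype.card {y : κ // y = t x} := Fintype.card_subtype_compl _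
      _ = Fintype.card κ - 1 := by rw [Fintype.card_subtype_eq]
  simp only [h, Finset.prod_const, Finset.card_univ, Nat.card_eq_fintype_card]

section Counting

variable {k N d : ℕ}

/-- The ordered pair of endpoints (in `vpos` order) for the edge between `(i,x)` and `u j`. -/
def cmap (i : Fin k) (u : Fin d → Fin k × Fin N) (p : Fin N × Fin d) :
    (Fin k × Fin N) × (Fin k × Fin N) :=
  if vpos ((i, p.1) : Fin k × Fin N) < vpos (u p.2) then ((i, p.1), u p.2)
  else (u p.2, (i, p.1))

lemma cmap_inj (i : Fin k) (u : Fin d → Fin k × Fin N) (hu : Function.Injective u)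
    (hui : ∀ j, (u j).1 ≠ i) : Function.Injective (cmap i u) := by
  rintro ⟨x, j⟩ ⟨x', j'⟩ h
  unfold cmap at h
  split_ifs at h with h1 h2 h2 <;>
    simp only [Prod.mk.injEq] at h
  · obtain ⟨⟨-, h4⟩, h5⟩ := h
    rw [h4, hu h5]
  · exact absurd (congrArg Prod.fst h.1).symm (hui j')
  · exact absurd (congrArg Prod.fst h.2).symm (hui j')
  · obtain ⟨h5, -, h4⟩ := h
    rw [h4, hu h5]

lemma fail_iff (f : Fin k × Fin N → Fin k × Fin N → Bool) (i : Fin k)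
    (u : Fin d → Fin k × Fin N) (hui : ∀ j, (u j).1 ≠ i) (vec : Fin d → Bool)
    (x : Fin N) (j : Fin d) :
    (¬ (if vec j then (orientOf f).adj (i, x) (u j) else (orientOf f).adj (u j) (i, x))) ↔
      Function.uncurry f (cmap i u (x, j)) ≠
        (if vpos ((i, x) : Fin k × Fin N) < vpos (u j) then vec j else !(vec j)) := by
  have hne' : i ≠ (u j).1 := fun h => (hui j) h.symm
  by_cases h1 : vpos ((i, x) : Fin k × Fin N) < vpos (u j)
  · have hnlt : ¬ vpos (u j) < vpos ((i, x) : Fin k × Fin N) := by omega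
    cases hv : vec j <;>
      simp [orientOf, cmap, Function.uncurry, hv, h1, hnlt, hne', hui j]
  · have hne2 : vpos ((i, x) : Fin k × Fin N) ≠ vpos (u j) :=
      fun hh => hne' (congrArg Prod.fst (vpos_inj hh))
    have hlt : vpos (u j) < vpos ((i, x) : Fin k × Fin N) := by omega
    cases hv : vec j <;>
      simp [orientOf, cmap, Function.uncurry, hv, h1, hlt, hne', hui j]

lemma card_bad (i : Fin k) (u : Fin d → Fin k × Fin N)
    (hu : Function.Injective u) (hui : ∀ j, (u j).1 ≠ i) (vec : Fin d → Bool) :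
    Nat.card {f : Fin k × Fin N → Fin k × Fin N → Bool //
        ∀ x : Fin N, ∃ j, ¬ (if vec j then (orientOf f).adj (i, x) (u j)
          else (orientOf f).adj (u j) (i, x))} * 2 ^ (N * d) =
      (2 ^ d - 1) ^ N * Nat.card (Fin k × Fin N → Fin k × Fin N → Bool) := by
  classical
  set tr : Fin N → Fin d → Bool := fun x j =>
    if vpos ((i, x) : Fin k × Fin N) < vpos (u j) then vec j else !(vec j) with htr
  set P : (Fin N × Fin d → Bool) → Prop := fun g => ∀ x, ∃ j, g (x, j) ≠ tr x j with hP
  have e0 : {f : Fin k × Fin N → Fin k × Fin N → Bool //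
        ∀ x : Fin N, ∃ j, ¬ (if vec j then (orientOf f).adj (i, x) (u j)
          else (orientOf f).adj (u j) (i, x))} ≃
      {F : (Fin k × Fin N) × (Fin k × Fin N) → Bool // P (F ∘ cmap i u)} :=
    (Equiv.curry (Fin k × Fin N) (Fin k × Fin N) Bool).symm.subtypeEquiv (fun f => by
      refine forall_congr' fun x => exists_congr fun j => ?_
      exact fail_iff f i u hui vec x j)
  have h2 : (2 : ℕ) ^ (N * d) = Nat.card (Fin N × Fin d → Bool) := by
    simp [Nat.card_fun, Nat.card_eq_fintype_card]
  have h3 : Nat.card {g : Fin N × Fin d → Bool // P g} = (2 ^ d - 1) ^ N := by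
    have e1 : {g : Fin N × Fin d → Bool // P g} ≃
        {G : Fin N → Fin d → Bool // ∀ x, G x ≠ tr x} :=
      (Equiv.curry (Fin N) (Fin d) Bool).subtypeEquiv (fun g => by
        refine forall_congr' fun x => ?_
        rw [← Function.ne_iff]
        exact Iff.rfl)
    rw [Nat.card_congr e1, card_avoid tr]
    simp [Nat.card_fun, Nat.card_eq_fintype_card]
  rw [Nat.card_congr e0, h2, card_precomp (cmap i u) (cmap_inj i u hu hui) P, h3,
    Nat.card_congr (Equiv.curry (Fin k × Fin N) (Fin k × Fin N) Bool)]

end Counting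

lemma exists_inj_into {α : Type*} [DecidableEq α] [Fintype α] (s : Finset α) (n : ℕ)
    (h : n ≤ s.card) : ∃ v : Fin n → α, Function.Injective v ∧ ∀ m, v m ∈ s := by
  have hcard : Fintype.card (Fin n) ≤ Fintype.card ↥s := by
    simpa [Fintype.card_coe] using h
  obtain ⟨e⟩ := Function.Embedding.nonempty_of_card_le hcard
  exact ⟨fun m => (e m : α), fun a b hab => e.injective (Subtype.ext hab), fun m => (e m).2⟩

lemma extend_u {k N d t : ℕ} (ht : t ≤ d) (hdN : d ≤ N) (hk : 2 ≤ k) (i : Fin k)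
    (u : Fin t → Fin k × Fin N) (hu : Function.Injective u) (hui : ∀ j, (u j).1 ≠ i) :
    ∃ u' : Fin d → Fin k × Fin N, Function.Injective u' ∧ (∀ j, (u' j).1 ≠ i) ∧
      ∀ j : Fin t, u' (Fin.castLE ht j) = u j := by
  classical
  have : Nontrivial (Fin k) := Fin.nontrivial_iff_two_le.2 hk
  obtain ⟨i', hi'⟩ := exists_ne i
  set F : Finset (Fin N) := Finset.univ.filter (fun a => ∃ j, u j = (i', a)) with hF
  have hFt : F.card ≤ t := by
    have hsub : F ⊆ Finset.image (fun j => (u j).2) Finset.univ := by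
      intro a ha
      simp only [hF, Finset.mem_filter] at ha
      obtain ⟨-, j, hj⟩ := ha
      exact Finset.mem_image.2 ⟨j, Finset.mem_univ j, by rw [hj]⟩
    calc F.card ≤ _ := Finset.card_le_card hsub
      _ ≤ (Finset.univ : Finset (Fin t)).card := Finset.card_image_le
      _ = t := by simp
  have hs : d - t ≤ (Finset.univ \ F).card := by
    rw [Finset.card_sdiff_of_subset (Finset.subset_univ F), Finset.card_univ, Fintype.card_fin]
    omega
  obtain ⟨v, hvinj, hvmem⟩ := exists_inj_into (Finset.univ \ F) (d - t) hs
  have hvF : ∀ m, v m ∉ F := fun m => (Finset.mem_sdiff.1 (hvmem m)).2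
  refine ⟨fun j => if h : (j : ℕ) < t then u ⟨j, h⟩ else
      (i', v ⟨(j : ℕ) - t, by omega⟩), ?_, ?_, ?_⟩
  · intro a b hab
    dsimp only at hab
    by_cases ha : (a : ℕ) < t <;> by_cases hb : (b : ℕ) < t
    · rw [dif_pos ha, dif_pos hb] at hab
      have h2 : ((⟨(a : ℕ), ha⟩ : Fin t) : ℕ) = ((⟨(b : ℕ), hb⟩ : Fin t) : ℕ) :=
        congrArg Fin.val (hu hab)
      have : (a : ℕ) = b := h2
      omega
    · rw [dif_pos ha, dif_neg hb] at hab
      exact absurd (Finset.mem_filter.2 ⟨Finset.mem_univ _, ⟨⟨a, ha⟩, hab⟩⟩) (hvF _)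
    · rw [dif_neg ha, dif_pos hb] at hab
      exact absurd (Finset.mem_filter.2 ⟨Finset.mem_univ _, ⟨⟨b, hb⟩, hab.symm⟩⟩) (hvF _)
    · rw [dif_neg ha, dif_neg hb] at hab
      have h2 := hvinj (congrArg Prod.snd hab)
      have : (a : ℕ) - t = (b : ℕ) - t := congrArg Fin.val h2
      omega
  · intro j
    dsimp only
    by_cases hj : (j : ℕ) < t
    · rw [dif_pos hj]; exact hui _
    · rw [dif_neg hj]; exact hi'
  · intro j
    dsimp only
    have hj : ((Fin.castLE ht j : Fin d) : ℕ) < t := j.2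
    rw [dif_pos hj]
    congr 1

lemma main_count (k N d : ℕ) (hk : 2 ≤ k) (hdN : d ≤ N) :
    Nat.card {f : Fin k × Fin N → Fin k × Fin N → Bool //
        ¬ IsFullOn (orientOf f) Prod.fst d} * 2 ^ (N * d) ≤
      k * (k * N) ^ d * 2 ^ d * ((2 ^ d - 1) ^ N *
        Nat.card (Fin k × Fin N → Fin k × Fin N → Bool)) := by
  classical
  set A := Fin k × Fin N
  set Ω := A → A → Bool
  set BadP : (Fin k × (Fin d → A) × (Fin d → Bool)) → Ω → Prop := fun τ f =>
    ∀ x : Fin N, ∃ j, ¬ (if τ.2.2 j then (orientOf f).adj (τ.1, x) (τ.2.1 j)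
      else (orientOf f).adj (τ.2.1 j) (τ.1, x)) with hBadP
  set T : Finset (Fin k × (Fin d → A) × (Fin d → Bool)) :=
    Finset.univ.filter (fun τ => Function.Injective τ.2.1 ∧ ∀ j, (τ.2.1 j).1 ≠ τ.1) with hT
  have hsub : Finset.univ.filter (fun f : Ω => ¬ IsFullOn (orientOf f) Prod.fst d) ⊆
      T.biUnion (fun τ => Finset.univ.filter (BadP τ)) := by
    intro f hf
    rw [Finset.mem_filter] at hf
    obtain ⟨-, hf⟩ := hf
    rw [IsFullOn] at hf
    push_neg at hf
    obtain ⟨i, t, ht, u, huinj, huavoid, vec, hno⟩ := hf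
    obtain ⟨u', hu'inj, hu'avoid, hu'res⟩ := extend_u ht hdN hk i u huinj huavoid
    set vec' : Fin d → Bool := fun j => if h : (j : ℕ) < t then vec ⟨j, h⟩ else true with hvec'
    refine Finset.mem_biUnion.2 ⟨(i, u', vec'), ?_, ?_⟩
    · exact Finset.mem_filter.2 ⟨Finset.mem_univ _, hu'inj, hu'avoid⟩
    · refine Finset.mem_filter.2 ⟨Finset.mem_univ _, fun x => ?_⟩
      have hx := hno ((i, x) : A) rfl
      obtain ⟨j, hj⟩ := hx
      refine ⟨Fin.castLE ht j, ?_⟩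
      have h1 : u' (Fin.castLE ht j) = u j := hu'res j
      have h2 : vec' (Fin.castLE ht j) = vec j := by
        have hjt : ((Fin.castLE ht j : Fin d) : ℕ) < t := j.2
        simp only [hvec', dif_pos hjt]
        congr 1
      simp only [hBadP, h1, h2]
      exact hj
  have hnum : Nat.card {f : Ω // ¬ IsFullOn (orientOf f) Prod.fst d} =
      (Finset.univ.filter (fun f : Ω => ¬ IsFullOn (orientOf f) Prod.fst d)).card := by
    rw [Nat.card_eq_fintype_card, Fintype.card_subtype]
  have hbadcard : ∀ τ ∈ T, (Finset.univ.filter (BadP τ)).card * 2 ^ (N * d) =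
      (2 ^ d - 1) ^ N * Nat.card Ω := by
    intro τ hτ
    rw [hT, Finset.mem_filter] at hτ
    obtain ⟨-, hinj, havoid⟩ := hτ
    have := card_bad τ.1 τ.2.1 hinj havoid τ.2.2
    rw [← this, Nat.card_eq_fintype_card, Fintype.card_subtype]
  have hTcard : T.card ≤ k * (k * N) ^ d * 2 ^ d := by
    calc T.card ≤ Fintype.card (Fin k × (Fin d → A) × (Fin d → Bool)) := Finset.card_le_univ T
      _ = k * (k * N) ^ d * 2 ^ d := by
        have hA : Fintype.card A = k * N := by
          show Fintype.card (Fin k × Fin N) = k * N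
          simp
        simp [Fintype.card_prod, Fintype.card_fun, hA, mul_assoc]
  calc Nat.card {f : Ω // ¬ IsFullOn (orientOf f) Prod.fst d} * 2 ^ (N * d)
      ≤ (T.biUnion (fun τ => Finset.univ.filter (BadP τ))).card * 2 ^ (N * d) := by
        rw [hnum]
        exact Nat.mul_le_mul_right _ (Finset.card_le_card hsub)
    _ ≤ (∑ τ ∈ T, (Finset.univ.filter (BadP τ)).card) * 2 ^ (N * d) :=
        Nat.mul_le_mul_right _ (Finset.card_biUnion_le)
    _ = ∑ τ ∈ T, (Finset.univ.filter (BadP τ)).card * 2 ^ (N * d) := by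
        rw [Finset.sum_mul]
    _ = ∑ τ ∈ T, (2 ^ d - 1) ^ N * Nat.card Ω := Finset.sum_congr rfl hbadcard
    _ = T.card * ((2 ^ d - 1) ^ N * Nat.card Ω) := by rw [Finset.sum_const, smul_eq_mul]
    _ ≤ k * (k * N) ^ d * 2 ^ d * ((2 ^ d - 1) ^ N * Nat.card Ω) :=
        Nat.mul_le_mul_right _ hTcard

lemma poly_le_pow (d : ℕ) (hd : 2 ≤ d) : 2 * d ^ 2 + 3 * d + 2 ≤ 4 ^ d := by
  induction d, hd using Nat.le_induction with
  | base => norm_num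
  | succ n hn ih =>
    have h4 : (4 : ℕ) ^ (n + 1) = 4 * 4 ^ n := by ring
    nlinarith [ih]


/-- Let `k ≥ 5`, `d ≥ 2`, `N = ⌈8^d log k⌉`.  For a uniformly
random orientation `H` of the complete `k`-partite graph with parts of size `N`
(modelled by the uniform counting measure on Boolean families, which induces the
uniform distribution on orientations), the probability that `H` fails to be
`(k,d,N)`-full is at most `k·(kN)^d·2^d·exp(−2^{−d}N)`, and this bound is `< 1`. -/
theorem random_orientation_full (d k : ℕ) (hd : 2 ≤ d) (hk : 5 ≤ k) :
    let N : ℕ := ⌈(8 : ℝ) ^ d * Real.log k⌉₊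
    (Nat.card {f : Fin k × Fin N → Fin k × Fin N → Bool //
        ¬ IsFullOn (orientOf f) Prod.fst d} : ℝ) /
      (Nat.card (Fin k × Fin N → Fin k × Fin N → Bool) : ℝ) ≤
        (k : ℝ) * ((k * N : ℕ) : ℝ) ^ d * 2 ^ d * Real.exp (-(N : ℝ) / 2 ^ d) ∧
    (k : ℝ) * ((k * N : ℕ) : ℝ) ^ d * 2 ^ d * Real.exp (-(N : ℝ) / 2 ^ d) < 1 := by
  intro N
  have hk0 : (0 : ℝ) < k := by positivity
  have hlogk : (1 : ℝ) ≤ Real.log k := by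
    rw [Real.le_log_iff_exp_le hk0]
    calc Real.exp 1 ≤ 2.7182818286 := Real.exp_one_lt_d9.le
      _ ≤ 5 := by norm_num
      _ ≤ (k : ℝ) := by exact_mod_cast hk
  have hN8 : 8 ^ d ≤ N := by
    have h1 : ((8 ^ d : ℕ) : ℝ) ≤ (8 : ℝ) ^ d * Real.log k := by
      push_cast
      nlinarith [pow_pos (by norm_num : (0:ℝ) < 8) d]
    calc (8 : ℕ) ^ d = ⌈((8 ^ d : ℕ) : ℝ)⌉₊ := by rw [Nat.ceil_natCast]
      _ ≤ N := Nat.ceil_le_ceil h1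
  have hd8 : d ≤ 8 ^ d := le_of_lt (Nat.lt_pow_self (by norm_num : 1 < 8))
  have hdN : d ≤ N := hd8.trans hN8
  have hNpos : 0 < N := lt_of_lt_of_le (by positivity) hN8
  have hNlogk : (8 : ℝ) ^ d * Real.log k ≤ (N : ℝ) := Nat.le_ceil _
  -- the count of functions
  set CΩ : ℕ := Nat.card (Fin k × Fin N → Fin k × Fin N → Bool) with hCΩ
  have hCΩpos : 0 < CΩ := Nat.card_pos
  set K : ℕ := k * (k * N) ^ d * 2 ^ d with hK
  have hKcast : ((K : ℕ) : ℝ) = (k : ℝ) * ((k * N : ℕ) : ℝ) ^ d * 2 ^ d := by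
    rw [hK]; push_cast; ring
  have h2dpos : (0 : ℝ) < 2 ^ d := by positivity
  have h2d1 : (1 : ℝ) ≤ 2 ^ d := one_le_pow₀ (by norm_num)
  -- the key exponential bound
  have hq : (((2 : ℝ) ^ d - 1) / 2 ^ d) ^ N ≤ Real.exp (-(N : ℝ) / 2 ^ d) := by
    have hbase : ((2 : ℝ) ^ d - 1) / 2 ^ d ≤ Real.exp (-(1 : ℝ) / 2 ^ d) := by
      have h := Real.add_one_le_exp (-(1 : ℝ) / 2 ^ d)
      have heq : ((2 : ℝ) ^ d - 1) / 2 ^ d = -(1 : ℝ) / 2 ^ d + 1 := by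
        field_simp
        ring
      rw [heq]; exact h
    have hnn : (0 : ℝ) ≤ ((2 : ℝ) ^ d - 1) / 2 ^ d := by
      apply div_nonneg _ h2dpos.le
      linarith
    calc (((2 : ℝ) ^ d - 1) / 2 ^ d) ^ N ≤ (Real.exp (-(1 : ℝ) / 2 ^ d)) ^ N :=
          pow_le_pow_left₀ hnn hbase N
      _ = Real.exp (-(N : ℝ) / 2 ^ d) := by
          rw [← Real.exp_nat_mul]; congr 1; ring
  constructor
  · -- part 1
    have hmain := main_count k N d (by omega) hdN
    have hcast : (Nat.card {f : Fin k × Fin N → Fin k × Fin N → Bool //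
          ¬ IsFullOn (orientOf f) Prod.fst d} : ℝ) * 2 ^ (N * d) ≤
        (K : ℝ) * ((((2 ^ d - 1 : ℕ)) : ℝ) ^ N * CΩ) := by
      exact_mod_cast hmain
    have hsubcast : (((2 ^ d - 1 : ℕ)) : ℝ) = (2 : ℝ) ^ d - 1 := by
      have : (1 : ℕ) ≤ 2 ^ d := Nat.one_le_two_pow
      push_cast [this]
      ring
    rw [hsubcast] at hcast
    set num : ℝ := (Nat.card {f : Fin k × Fin N → Fin k × Fin N → Bool //
        ¬ IsFullOn (orientOf f) Prod.fst d} : ℝ) with hnum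
    have hnumnn : 0 ≤ num := by positivity
    have hCr : (0 : ℝ) < (CΩ : ℝ) := by exact_mod_cast hCΩpos
    rw [div_le_iff₀ hCr, ← hKcast]
    have hpowsplit : (2 : ℝ) ^ (N * d) = ((2 : ℝ) ^ d) ^ N := by
      rw [mul_comm, pow_mul]
    have step1 : num ≤ (K : ℝ) * (((2 : ℝ) ^ d - 1) / 2 ^ d) ^ N * CΩ := by
      rw [div_pow]
      rw [← hpowsplit]
      calc num = num * 2 ^ (N * d) / 2 ^ (N * d) := by
            field_simp
        _ ≤ (K : ℝ) * (((2 : ℝ) ^ d - 1) ^ N * CΩ) / 2 ^ (N * d) := by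
            apply div_le_div_of_nonneg_right ?_ (by positivity)
            · linarith [hcast]
        _ = (K : ℝ) * (((2 : ℝ) ^ d - 1) ^ N / 2 ^ (N * d)) * CΩ := by ring
    calc num ≤ (K : ℝ) * (((2 : ℝ) ^ d - 1) / 2 ^ d) ^ N * CΩ := step1
      _ ≤ (K : ℝ) * Real.exp (-(N : ℝ) / 2 ^ d) * CΩ := by
          have hKnn : (0 : ℝ) ≤ (K : ℝ) := by positivity
          have := mul_le_mul_of_nonneg_left hq hKnn
          exact mul_le_mul_of_nonneg_right this hCr.le
  · -- part 2
    rw [← hKcast]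
    -- K ≤ k ^ (2d² + 3d + 1)
    have hNk : N ≤ 8 ^ d * k := by
      rw [show (N : ℕ) = ⌈(8 : ℝ) ^ d * Real.log k⌉₊ from rfl]
      apply Nat.ceil_le.2
      have hlk : Real.log k ≤ (k : ℝ) := by
        calc Real.log k ≤ (k : ℝ) - 1 := Real.log_le_sub_one_of_pos hk0
          _ ≤ (k : ℝ) := by linarith
      calc (8 : ℝ) ^ d * Real.log k ≤ (8 : ℝ) ^ d * k := by
            apply mul_le_mul_of_nonneg_left hlk (by positivity)
        _ = ((8 ^ d * k : ℕ) : ℝ) := by push_cast; ring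
    have h8k : (8 : ℕ) ^ d ≤ k ^ (2 * d) := by
      calc (8 : ℕ) ^ d ≤ (k ^ 2) ^ d := Nat.pow_le_pow_left (by nlinarith) d
        _ = k ^ (2 * d) := by rw [← pow_mul]
    have hNle : N ≤ k ^ (2 * d + 1) := by
      calc N ≤ 8 ^ d * k := hNk
        _ ≤ k ^ (2 * d) * k := Nat.mul_le_mul_right k h8k
        _ = k ^ (2 * d + 1) := by rw [pow_succ]
    have hKle : K ≤ k ^ (2 * d ^ 2 + 3 * d + 1) := by
      calc K = k * (k * N) ^ d * 2 ^ d := rfl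
        _ ≤ k * (k * k ^ (2 * d + 1)) ^ d * k ^ d := by
            apply Nat.mul_le_mul
            apply Nat.mul_le_mul_left
            apply Nat.pow_le_pow_left
            exact Nat.mul_le_mul_left k hNle
            apply Nat.pow_le_pow_left (by omega)
        _ = k ^ (2 * d ^ 2 + 3 * d + 1) := by
            rw [← pow_succ']
            rw [← pow_mul, ← pow_succ', ← pow_add]
            congr 1
            ring
    have hexp : ((k : ℝ)) ^ (4 ^ d : ℕ) ≤ Real.exp ((N : ℝ) / 2 ^ d) := by
      have harg : (4 : ℝ) ^ d * Real.log k ≤ (N : ℝ) / 2 ^ d := by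
        rw [le_div_iff₀ h2dpos]
        calc (4 : ℝ) ^ d * Real.log k * 2 ^ d = (8 : ℝ) ^ d * Real.log k := by
              rw [show (8 : ℝ) = 4 * 2 by norm_num, mul_pow]; ring
          _ ≤ (N : ℝ) := hNlogk
      calc ((k : ℝ)) ^ (4 ^ d : ℕ) = Real.exp ((4 ^ d : ℕ) * Real.log k) := by
            rw [Real.exp_nat_mul, Real.exp_log hk0]
        _ ≤ Real.exp ((N : ℝ) / 2 ^ d) := by
            apply Real.exp_le_exp.2
            calc ((4 ^ d : ℕ) : ℝ) * Real.log k = (4 : ℝ) ^ d * Real.log k := by push_cast; ring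
              _ ≤ (N : ℝ) / 2 ^ d := harg
    have hKlt : (K : ℝ) < Real.exp ((N : ℝ) / 2 ^ d) := by
      have h1 : K < k ^ (4 ^ d : ℕ) := by
        calc K ≤ k ^ (2 * d ^ 2 + 3 * d + 1) := hKle
          _ < k ^ (4 ^ d : ℕ) := by
              apply Nat.pow_lt_pow_right (by omega)
              have := poly_le_pow d hd
              omega
      calc (K : ℝ) < ((k ^ (4 ^ d : ℕ) : ℕ) : ℝ) := by exact_mod_cast h1
        _ = ((k : ℝ)) ^ (4 ^ d : ℕ) := by push_cast; ring
        _ ≤ Real.exp ((N : ℝ) / 2 ^ d) := hexp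
    have hrw : Real.exp (-(N : ℝ) / 2 ^ d) = (Real.exp ((N : ℝ) / 2 ^ d))⁻¹ := by
      rw [← Real.exp_neg]; congr 1; ring
    rw [hrw, ← div_eq_mul_inv, div_lt_one (Real.exp_pos _)]
    exact hKlt
end

section
/- Let g ≥ 2. Every oriented graph G of order at most 6g admits an injective homomorphism φ into some oriented graph H containing H_g as a spanning subgraph, with the image of φ contained in the independent set P₀ of H_g. -/
/-- The oriented graph `H_g` obtained from a full graph `K` by deleting all arcs
between two parts whose (0-based) index is at least the cutoff `c`. -/
def FullGraph.Hg {V : Type*} {k d N : ℕ} (K : FullGraph V k d N) (c : ℕ) :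
    OrientedGraph V where
  adj u v := K.H.adj u v ∧ ¬ (c ≤ (K.part u).val ∧ c ≤ (K.part v).val)
  loopless := fun v h => K.H.loopless v h.1
  no_opposite := fun u v h h' => K.H.no_opposite u v h.1 h'.1

/-- Let `g ≥ 2` and let `K` be a `(144g−162, 10, N)`-full graph
(`N ≥ 1`).  Every oriented graph `D` of order at most `6g` admits an injective
homomorphism `φ` into some oriented graph `H` containing `H_g` as a spanning
subgraph, with the image of `φ` contained in the independent set `P₀` (the union of
the parts of 0-based index `≥ 138g−162`). -/
theorem small_graphs_embed_in_P0
    {V W : Type*} [Fintype W] (g N : ℕ) (hg : 2 ≤ g) (hN : 1 ≤ N)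
    (K : FullGraph V (144 * g - 162) 10 N)
    (D : OrientedGraph W) (horder : Fintype.card W ≤ 6 * g) :
    ∃ H : OrientedGraph V,
      (∀ u v, (K.Hg (138 * g - 162)).adj u v → H.adj u v) ∧
      ∃ φ : W → V, Function.Injective φ ∧ D.IsHom H φ ∧
        ∀ w : W, 138 * g - 162 ≤ (K.part (φ w)).val := by
  have hrep : ∀ i : Fin (144 * g - 162), ∃ v : V, K.part v = i := by
    intro i
    have h1 := K.partCard i
    have hpos : 0 < Nat.card {v : V | K.part v = i} := by omega
    obtain ⟨⟨v, hv⟩⟩ := (Nat.card_pos_iff.mp hpos).1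
    exact ⟨v, hv⟩
  choose rep hrep using hrep
  let e := Fintype.equivFin W
  let idx : W → Fin (144 * g - 162) := fun w =>
    ⟨138 * g - 162 + (e w).val, by have := (e w).isLt; omega⟩
  have hidx_inj : Function.Injective idx := by
    intro a b h
    have h2 : (e a).val = (e b).val := by
      have := congrArg Fin.val h
      simp only [idx] at this
      omega
    exact e.injective (Fin.val_injective h2)
  set φ : W → V := fun w => rep (idx w) with hφ
  have hpart : ∀ w, K.part (φ w) = idx w := fun w => hrep (idx w)
  have hφinj : Function.Injective φ := by
    intro a b h
    apply hidx_inj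
    rw [← hpart a, ← hpart b, h]
  have hP0 : ∀ w, 138 * g - 162 ≤ (K.part (φ w)).val := by
    intro w; rw [hpart]; simp [idx]
  have hnoHg : ∀ a b : W, ¬ (K.Hg (138 * g - 162)).adj (φ a) (φ b) := by
    intro a b h
    exact h.2 ⟨hP0 a, hP0 b⟩
  refine ⟨{ adj := fun u v => (K.Hg (138 * g - 162)).adj u v ∨
              ∃ a b, D.adj a b ∧ u = φ a ∧ v = φ b,
            loopless := ?_, no_opposite := ?_ }, fun u v h => Or.inl h,
          φ, hφinj, fun a b h => Or.inr ⟨a, b, h, rfl, rfl⟩, hP0⟩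
  · rintro v (h | ⟨a, b, hab, rfl, h2⟩)
    · exact (K.Hg _).loopless v h
    · exact D.loopless a (hφinj h2.symm ▸ hab)
  · rintro u v (h | ⟨a, b, hab, rfl, rfl⟩) (h' | ⟨a', b', hab', he1, he2⟩)
    · exact (K.Hg _).no_opposite u v h h'
    · exact hnoHg b' a' (he2 ▸ he1 ▸ h)
    · exact hnoHg b a h'
    · have := hφinj he1; have := hφinj he2
      subst this; exact D.no_opposite a b hab (hφinj he1 ▸ hab')
end

section
/- Let G be an oriented graph, let v₁,…,v_n be an ordering of its vertices, and let d ≥ 1 be such that each v_i has at most d neighbours among v₁,…,v_{i−1}, and let Δ be the maximum degree of G. Then for each i, the number of already-ordered vertices at underlying-graph distance exactly 2 from v_i is at most (d+k)Δ − Δ − dk, where k = |N(v_i) ∩ {v₁,…,v_{i−1}}|; moreover (d+k)Δ − Δ − dk + k ≤ 2dΔ − Δ − d² + d for all 0 ≤ k ≤ d ≤ Δ. -/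
open Finset

lemma walk_length_two {V : Type*} {G : SimpleGraph V} {a b : V} (p : G.Walk a b)
    (hp : p.length = 2) : ∃ w, G.Adj a w ∧ G.Adj w b := by
  cases p with
  | nil => simp at hp
  | cons h q =>
    cases q with
    | nil => simp at hp
    | cons h2 q2 =>
      have hq2 : q2.length = 0 := by simp only [SimpleGraph.Walk.length_cons] at hp; omega
      have heq := q2.eq_of_length_eq_zero hq2
      exact ⟨_, h, heq ▸ h2⟩

lemma card_aux {n : ℕ} (P : Fin n → Prop) [DecidablePred P] :
    Nat.card {j : Fin n | P j} = (univ.filter P).card := by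
  simp [Nat.card_eq_fintype_card, Fintype.card_subtype]

/-- Let `G` be an oriented graph, `v₁,…,v_n` an ordering of its
vertices such that each `v_i` has at most `d ≥ 1` neighbours among `v₁,…,v_{i−1}`,
and let `Δ` be the maximum degree.  Then for each `i`, the number of earlier
vertices at underlying distance exactly 2 from `v_i` is at most `(d+k)Δ − Δ − dk`
where `k` is the number of earlier neighbours of `v_i`; moreover
`(d+k)Δ − Δ − dk + k ≤ 2dΔ − Δ − d² + d` for all `0 ≤ k ≤ d ≤ Δ`. -/
theorem greedy_counting_bound {V : Type*} [Fintype V] (G : OrientedGraph V)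
    (n : ℕ) (v : Fin n → V) (hv : Function.Bijective v)
    (d Δ : ℕ) (hd : 1 ≤ d) (hdΔ : d ≤ Δ)
    (hΔ : ∀ x : V, G.degree x ≤ Δ)
    (hearly : ∀ i : Fin n,
      Nat.card {j : Fin n | j < i ∧ G.underlying.Adj (v j) (v i)} ≤ d) :
    (∀ i : Fin n,
      (Nat.card {j : Fin n | j < i ∧ G.underlying.dist (v j) (v i) = 2} : ℤ) ≤
        ((d : ℤ) + Nat.card {j : Fin n | j < i ∧ G.underlying.Adj (v j) (v i)}) * Δ
          - Δ - d * Nat.card {j : Fin n | j < i ∧ G.underlying.Adj (v j) (v i)}) ∧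
    (∀ k : ℕ, k ≤ d →
      ((d : ℤ) + k) * Δ - Δ - d * k + k ≤ 2 * d * Δ - Δ - d ^ 2 + d) := by
  classical
  -- general degree bound in index form
  have hM : ∀ x : V, (univ.filter (fun j : Fin n => G.underlying.Adj (v j) x)).card ≤ Δ := by
    intro x
    rw [← card_aux]
    have h1 : Nat.card {j : Fin n | G.underlying.Adj (v j) x}
        = Nat.card {u : V | G.underlying.Adj u x} :=
      Nat.card_congr ((Equiv.ofBijective v hv).subtypeEquiv (fun a => Iff.rfl))
    have h2 : {u : V | G.underlying.Adj u x} = {u : V | G.adj x u ∨ G.adj u x} := by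
      ext u
      constructor
      · rintro (h | h)
        · exact Or.inr h
        · exact Or.inl h
      · rintro (h | h)
        · exact Or.inr h
        · exact Or.inl h
    rw [h1, h2]
    exact hΔ x
  constructor
  · intro i
    set N : Finset (Fin n) :=
      univ.filter (fun j => G.underlying.Adj (v j) (v i)) with hN
    set A : Fin n → Finset (Fin n) :=
      fun l => univ.filter (fun j => j < i ∧ G.underlying.Adj (v j) (v l)) with hA
    set E : Finset (Fin n) := N.filter (fun j => j < i) with hE
    set S : Finset (Fin n) :=
      univ.filter (fun j => j < i ∧ G.underlying.dist (v j) (v i) = 2) with hS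
    have hEN : E ⊆ N := filter_subset _ _
    -- rewrite the Nat.cards in the goal
    have hkS : Nat.card {j : Fin n | j < i ∧ G.underlying.dist (v j) (v i) = 2} = S.card :=
      card_aux _
    have hkE : Nat.card {j : Fin n | j < i ∧ G.underlying.Adj (v j) (v i)} = E.card := by
      rw [card_aux]
      congr 1
      rw [hE, hN, filter_filter]
      exact filter_congr (fun j _ => by tauto)
    rw [hkS, hkE]
    -- S is covered by the union of A l over l ∈ N
    have hcover : S ⊆ N.biUnion A := by
      intro j hj
      rw [hS, mem_filter] at hj
      obtain ⟨-, hji, hdist⟩ := hj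
      obtain ⟨p, hp⟩ := SimpleGraph.exists_walk_of_dist_ne_zero (by omega : G.underlying.dist (v j) (v i) ≠ 0)
      rw [hdist] at hp
      -- extract the middle vertex of the length-2 walk
      obtain ⟨w, h1, h2⟩ := walk_length_two p hp
      obtain ⟨l, rfl⟩ := hv.2 w
      refine mem_biUnion.2 ⟨l, ?_, ?_⟩
      · rw [hN, mem_filter]; exact ⟨mem_univ l, h2⟩
      · rw [hA, mem_filter]; exact ⟨mem_univ j, hji, h1⟩
    have hsum : S.card ≤ ∑ l ∈ N, (A l).card :=
      le_trans (card_le_card hcover) (card_biUnion_le)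
    -- bound for early middle vertices
    have hEbound : ∀ l ∈ E, ((A l).card : ℤ) ≤ (Δ : ℤ) - 1 := by
      intro l hl
      rw [hE, mem_filter, hN, mem_filter] at hl
      obtain ⟨⟨-, hadj⟩, hli⟩ := hl
      have hiA : i ∉ A l := by
        rw [hA, mem_filter]; rintro ⟨-, h, -⟩; exact absurd h (lt_irrefl i)
      have hsub : insert i (A l) ⊆ univ.filter (fun j => G.underlying.Adj (v j) (v l)) := by
        intro j hj
        rcases mem_insert.1 hj with rfl | hj
        · exact mem_filter.2 ⟨mem_univ _, hadj.symm⟩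
        · rw [hA, mem_filter] at hj; exact mem_filter.2 ⟨mem_univ _, hj.2.2⟩
      have := le_trans (card_le_card hsub) (hM (v l))
      rw [card_insert_of_notMem hiA] at this
      omega
    -- bound for late middle vertices
    have hLbound : ∀ l ∈ N, l ∉ E → ((A l).card : ℤ) ≤ (d : ℤ) - 1 := by
      intro l hlN hlE
      rw [hN, mem_filter] at hlN
      have hadj := hlN.2
      have hli : ¬ l < i := by
        intro h; exact hlE (by rw [hE, mem_filter]; exact ⟨by rw [hN, mem_filter]; exact ⟨mem_univ _, hadj⟩, h⟩)
      have hne : l ≠ i := by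
        rintro rfl; exact G.underlying.loopless.irrefl _ hadj
      have hil : i < l := lt_of_le_of_ne (not_lt.1 hli) (Ne.symm hne)
      have hiA : i ∉ A l := by
        rw [hA, mem_filter]; rintro ⟨-, h, -⟩; exact absurd h (lt_irrefl i)
      have hbd : (univ.filter (fun j : Fin n => j < l ∧ G.underlying.Adj (v j) (v l))).card ≤ d := by
        rw [← card_aux]; exact hearly l
      have hsub : insert i (A l) ⊆
          univ.filter (fun j : Fin n => j < l ∧ G.underlying.Adj (v j) (v l)) := by
        intro j hj
        rcases mem_insert.1 hj with rfl | hj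
        · exact mem_filter.2 ⟨mem_univ _, hil, hadj.symm⟩
        · rw [hA, mem_filter] at hj
          exact mem_filter.2 ⟨mem_univ _, lt_trans hj.2.1 hil, hj.2.2⟩
      have := le_trans (card_le_card hsub) hbd
      rw [card_insert_of_notMem hiA] at this
      omega
    -- split the sum
    have hsplit : (∑ l ∈ N, ((A l).card : ℤ)) =
        (∑ l ∈ E, ((A l).card : ℤ)) + ∑ l ∈ N \ E, ((A l).card : ℤ) :=
      by rw [← Finset.sum_sdiff hEN, add_comm]
    have hsumE : (∑ l ∈ E, ((A l).card : ℤ)) ≤ E.card * ((Δ : ℤ) - 1) := by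
      calc (∑ l ∈ E, ((A l).card : ℤ)) ≤ ∑ l ∈ E, ((Δ : ℤ) - 1) :=
            Finset.sum_le_sum hEbound
        _ = E.card * ((Δ : ℤ) - 1) := by rw [Finset.sum_const, nsmul_eq_mul]
    have hsumL : (∑ l ∈ N \ E, ((A l).card : ℤ)) ≤ (N \ E).card * ((d : ℤ) - 1) := by
      calc (∑ l ∈ N \ E, ((A l).card : ℤ)) ≤ ∑ l ∈ N \ E, ((d : ℤ) - 1) :=
            Finset.sum_le_sum (fun l hl => hLbound l (mem_sdiff.1 hl).1 (mem_sdiff.1 hl).2)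
        _ = (N \ E).card * ((d : ℤ) - 1) := by rw [Finset.sum_const, nsmul_eq_mul]
    have hcardN : N.card ≤ Δ := hM (v i)
    have hcardsd : (N \ E).card = N.card - E.card := card_sdiff_of_subset hEN
    have hEleN : E.card ≤ N.card := card_le_card hEN
    have hcast : ((S.card : ℤ)) ≤ ∑ l ∈ N, ((A l).card : ℤ) := by
      exact_mod_cast hsum
    have hLcard : ((N \ E).card : ℤ) ≤ (Δ : ℤ) - E.card := by
      rw [hcardsd]
      omega
    have hd1 : (0 : ℤ) ≤ (d : ℤ) - 1 := by
      have : (1 : ℤ) ≤ d := by exact_mod_cast hd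
      omega
    have hkd : (E.card : ℤ) ≤ d := by
      rw [← hkE]; exact_mod_cast hearly i
    nlinarith [hcast, hsplit, hsumE, hsumL, hLcard,
      mul_le_mul_of_nonneg_right hLcard hd1]
  · intro k hk
    have hk' : (k : ℤ) ≤ d := by exact_mod_cast hk
    have hdΔ' : (d : ℤ) ≤ Δ := by exact_mod_cast hdΔ
    have hd' : (1 : ℤ) ≤ d := by exact_mod_cast hd
    nlinarith [mul_nonneg (sub_nonneg.2 hk') (by linarith : (0:ℤ) ≤ (Δ:ℤ) - d + 1)]
end
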